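/- arXiv:1902.05066 — 2 statements merged into one kernel-verified Lean document; each statement's English description precedes it below -/
import Mathlib

section
/- Under the hypotheses of the previous decomposition, if additionally E[Y*|Y=1, T=0] = 1 − p for some p ∈ [0,1], then τ = E[Y*|Y=0, T=1]·P(Y=0) + p·P(Y=1). (Theorem 1 of the paper: the causal effect of an instance equals the expected label of treated negative bags weighted by P(Y=0), plus a constant term.) -/
open scoped Classical

/-- Probability of an event on a finite space with weights `w`. -/
noncomputable def Pr {Ω : Type*} [Fintype Ω] (w : Ω → ℝ) (A : Ω → Prop) : ℝ :=
  ∑ ω, if A ω then w ω else 0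

/-- Conditional expectation of `Z` given event `A`: `E[Z|A] = E[Z·1_A]/P(A)`. -/
noncomputable def CE {Ω : Type*} [Fintype Ω] (w : Ω → ℝ) (Z : Ω → ℝ) (A : Ω → Prop) : ℝ :=
  (∑ ω, if A ω then w ω * Z ω else 0) / Pr w A

/-- Theorem 1 of the paper: if `E[Y*|Y=1,T=0] = 1 − p`, then the treatment effect
equals `E[Y*|Y=0,T=1]·P(Y=0) + p·P(Y=1)`. -/
theorem treatment_effect_theorem1 {Ω : Type*} [Fintype Ω]
    (w : Ω → ℝ) (hw : ∀ ω, 0 ≤ w ω) (hw1 : ∑ ω, w ω = 1)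
    (Y Ys T : Ω → ℝ)
    (hY : ∀ ω, Y ω = 0 ∨ Y ω = 1)
    (hYs : ∀ ω, Ys ω = 0 ∨ Ys ω = 1)
    (hT : ∀ ω, T ω = 0 ∨ T ω = 1)
    (indep : ∀ i t : ℝ,
      Pr w (fun ω => Y ω = i ∧ T ω = t)
        = Pr w (fun ω => Y ω = i) * Pr w (fun ω => T ω = t))
    (hposev : ∀ i ∈ ({0, 1} : Finset ℝ), ∀ t ∈ ({0, 1} : Finset ℝ),
      0 < Pr w (fun ω => Y ω = i ∧ T ω = t))
    (hpos11 : CE w Ys (fun ω => Y ω = 1 ∧ T ω = 1) = 1)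
    (hneg00 : CE w Ys (fun ω => Y ω = 0 ∧ T ω = 0) = 0)
    (p : ℝ) (hp0 : 0 ≤ p) (hp1 : p ≤ 1)
    (hctrl : CE w Ys (fun ω => Y ω = 1 ∧ T ω = 0) = 1 - p) :
    CE w Ys (fun ω => T ω = 1) - CE w Ys (fun ω => T ω = 0)
      = CE w Ys (fun ω => Y ω = 0 ∧ T ω = 1) * Pr w (fun ω => Y ω = 0)
        + p * Pr w (fun ω => Y ω = 1) := by

  have hmem0 : (0:ℝ) ∈ ({0,1} : Finset ℝ) := by simp
  have hmem1 : (1:ℝ) ∈ ({0,1} : Finset ℝ) := by simp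
  have h00 := hposev 0 hmem0 0 hmem0
  have h01 := hposev 0 hmem0 1 hmem1
  have h10 := hposev 1 hmem1 0 hmem0
  have h11 := hposev 1 hmem1 1 hmem1
  have hPsplit : ∀ t : ℝ, Pr w (fun ω => T ω = t)
      = Pr w (fun ω => Y ω = 0 ∧ T ω = t) + Pr w (fun ω => Y ω = 1 ∧ T ω = t) := by
    intro t
    unfold Pr
    rw [← Finset.sum_add_distrib]
    apply Finset.sum_congr rfl
    intro ω _
    rcases hY ω with h | h <;> by_cases ht : T ω = t <;> simp [h, ht]
  have hNsplit : ∀ t : ℝ, (∑ ω, if T ω = t then w ω * Ys ω else 0)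
      = (∑ ω, if Y ω = 0 ∧ T ω = t then w ω * Ys ω else 0)
        + (∑ ω, if Y ω = 1 ∧ T ω = t then w ω * Ys ω else 0) := by
    intro t
    rw [← Finset.sum_add_distrib]
    apply Finset.sum_congr rfl
    intro ω _
    rcases hY ω with h | h <;> by_cases ht : T ω = t <;> simp [h, ht]
  have hT0 : 0 < Pr w (fun ω => T ω = 0) := by rw [hPsplit 0]; linarith
  have hT1 : 0 < Pr w (fun ω => T ω = 1) := by rw [hPsplit 1]; linarith
  have hY0 : 0 < Pr w (fun ω => Y ω = 0) := by
    have h := h01; rw [indep 0 1] at h; nlinarith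
  have hY1 : 0 < Pr w (fun ω => Y ω = 1) := by
    have h := h11; rw [indep 1 1] at h; nlinarith
  have num : ∀ (i t : ℝ), 0 < Pr w (fun ω => Y ω = i ∧ T ω = t) →
      (∑ ω, if Y ω = i ∧ T ω = t then w ω * Ys ω else 0)
        = CE w Ys (fun ω => Y ω = i ∧ T ω = t) * Pr w (fun ω => Y ω = i ∧ T ω = t) := by
    intro i t hpos
    unfold CE
    rw [div_mul_cancel₀ _ hpos.ne']
    refine Finset.sum_congr rfl fun ω _ => ?_
    by_cases h : Y ω = i ∧ T ω = t <;> simp [h]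
  have n11 := num 1 1 h11
  have n00 := num 0 0 h00
  have n10 := num 1 0 h10
  have n01 := num 0 1 h01
  rw [hpos11] at n11
  rw [hneg00] at n00
  rw [hctrl] at n10
  set c := CE w Ys (fun ω => Y ω = 0 ∧ T ω = 1) with hc
  unfold CE
  rw [hNsplit 0, hNsplit 1, n11, n00, n10, n01, indep 0 1, indep 1 1, indep 1 0]
  field_simp [hT0.ne', hT1.ne', hY0.ne', hY1.ne']
  ring
end

section
/- Under the hypotheses of Theorem 1, if the instance is causal with respect to an oracle classifier (so Y* = 1 whenever T = 1, regardless of Y), then τ ≥ P(Y=0); in particular if P(Y=0) > 0 then τ > 0, so causal instances have strictly larger treatment effect than non-causal instances (which have τ = 0). -/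
open scoped Classical

/-- Indicator-weighted sum, with the classical decidability instance. -/
noncomputable def S {Ω : Type*} [Fintype Ω] (A : Ω → Prop) (f : Ω → ℝ) : ℝ :=
  ∑ ω, if A ω then f ω else 0

/-- A causal instance (with respect to an oracle classifier) satisfies `Y* = 1`
whenever `T = 1`; then its treatment effect is at least `P(Y=0)`, and strictly
positive if `P(Y=0) > 0`. -/
theorem causal_treatment_effect_ge {Ω : Type*} [Fintype Ω]
    (w : Ω → ℝ) (hw : ∀ ω, 0 ≤ w ω) (hw1 : ∑ ω, w ω = 1)
    (Y Ys T : Ω → ℝ)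
    (hY : ∀ ω, Y ω = 0 ∨ Y ω = 1)
    (hYs : ∀ ω, Ys ω = 0 ∨ Ys ω = 1)
    (hT : ∀ ω, T ω = 0 ∨ T ω = 1)
    (indep : ∀ i t : ℝ,
      Pr w (fun ω => Y ω = i ∧ T ω = t)
        = Pr w (fun ω => Y ω = i) * Pr w (fun ω => T ω = t))
    (hposev : ∀ i ∈ ({0, 1} : Finset ℝ), ∀ t ∈ ({0, 1} : Finset ℝ),
      0 < Pr w (fun ω => Y ω = i ∧ T ω = t))
    (hpos11 : CE w Ys (fun ω => Y ω = 1 ∧ T ω = 1) = 1)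
    (hneg00 : CE w Ys (fun ω => Y ω = 0 ∧ T ω = 0) = 0)
    (p : ℝ) (hp0 : 0 ≤ p)
    (hctrl : CE w Ys (fun ω => Y ω = 1 ∧ T ω = 0) = 1 - p)
    (hcausal : ∀ ω, T ω = 1 → Ys ω = 1) :
    Pr w (fun ω => Y ω = 0)
        ≤ CE w Ys (fun ω => T ω = 1) - CE w Ys (fun ω => T ω = 0) ∧
    (0 < Pr w (fun ω => Y ω = 0) →
      0 < CE w Ys (fun ω => T ω = 1) - CE w Ys (fun ω => T ω = 0)) := by
  classical
  have hone : (1:ℝ) ∈ ({0,1} : Finset ℝ) := by simp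
  have hzero : (0:ℝ) ∈ ({0,1} : Finset ℝ) := by simp
  have hsplit : ∀ (t : ℝ) (f : Ω → ℝ),
      S (fun ω => T ω = t) f
        = S (fun ω => Y ω = 0 ∧ T ω = t) f + S (fun ω => Y ω = 1 ∧ T ω = t) f := by
    intro t f
    rw [S, S, S, ← Finset.sum_add_distrib]
    apply Finset.sum_congr rfl
    intro ω _
    rcases hY ω with h | h <;> by_cases h' : T ω = t <;> simp [h, h']
  have hYsum : Pr w (fun ω => Y ω = 0) + Pr w (fun ω => Y ω = 1) = 1 := by
    have : Pr w (fun ω => Y ω = 0) + Pr w (fun ω => Y ω = 1) = ∑ ω, w ω := by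
      rw [Pr, Pr, ← Finset.sum_add_distrib]
      apply Finset.sum_congr rfl
      intro ω _
      rcases hY ω with h | h <;> simp [h]
    rw [this, hw1]
  have hPrnn : ∀ A : Ω → Prop, 0 ≤ Pr w A := by
    intro A
    apply Finset.sum_nonneg
    intro ω _
    by_cases h : A ω <;> simp [h, hw ω]
  have hT0 : Pr w (fun ω => T ω = 0)
      = Pr w (fun ω => Y ω = 0 ∧ T ω = 0) + Pr w (fun ω => Y ω = 1 ∧ T ω = 0) :=
    hsplit 0 w
  have hT1 : Pr w (fun ω => T ω = 1)
      = Pr w (fun ω => Y ω = 0 ∧ T ω = 1) + Pr w (fun ω => Y ω = 1 ∧ T ω = 1) :=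
    hsplit 1 w
  have hT0pos : 0 < Pr w (fun ω => T ω = 0) := by
    rw [hT0]; exact add_pos (hposev 0 hzero 0 hzero) (hposev 1 hone 0 hzero)
  have hT1pos : 0 < Pr w (fun ω => T ω = 1) := by
    rw [hT1]; exact add_pos (hposev 0 hzero 1 hone) (hposev 1 hone 1 hone)
  have hCE1 : CE w Ys (fun ω => T ω = 1) = 1 := by
    have hnum : S (fun ω => T ω = 1) (fun ω => w ω * Ys ω)
        = Pr w (fun ω => T ω = 1) := by
      rw [S, Pr]
      apply Finset.sum_congr rfl
      intro ω _
      by_cases h : T ω = 1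
      · simp [h, hcausal ω h]
      · simp [h]
    show S (fun ω => T ω = 1) (fun ω => w ω * Ys ω) / Pr w (fun ω => T ω = 1) = 1
    rw [hnum, div_self (ne_of_gt hT1pos)]
  have h00pos := hposev 0 hzero 0 hzero
  have hnum00 : S (fun ω => Y ω = 0 ∧ T ω = 0) (fun ω => w ω * Ys ω) = 0 := by
    have h : S (fun ω => Y ω = 0 ∧ T ω = 0) (fun ω => w ω * Ys ω)
        / Pr w (fun ω => Y ω = 0 ∧ T ω = 0) = 0 := hneg00
    rw [div_eq_zero_iff] at h
    rcases h with h | h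
    · exact h
    · exact absurd h (ne_of_gt h00pos)
  have h10pos := hposev 1 hone 0 hzero
  have hnum10 : S (fun ω => Y ω = 1 ∧ T ω = 0) (fun ω => w ω * Ys ω)
      = (1 - p) * Pr w (fun ω => Y ω = 1 ∧ T ω = 0) := by
    have h : S (fun ω => Y ω = 1 ∧ T ω = 0) (fun ω => w ω * Ys ω)
        / Pr w (fun ω => Y ω = 1 ∧ T ω = 0) = 1 - p := hctrl
    rw [div_eq_iff (ne_of_gt h10pos)] at h
    rw [h]
  have hCE0 : CE w Ys (fun ω => T ω = 0)
      = (1 - p) * Pr w (fun ω => Y ω = 1) := by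
    show S (fun ω => T ω = 0) (fun ω => w ω * Ys ω) / Pr w (fun ω => T ω = 0) = _
    rw [hsplit 0 (fun ω => w ω * Ys ω), hnum00, hnum10, zero_add, indep 1 0]
    have hne := ne_of_gt hT0pos
    field_simp
  have hY1nn := hPrnn (fun ω => Y ω = 1)
  constructor
  · rw [hCE1, hCE0]
    nlinarith
  · intro hpos
    rw [hCE1, hCE0]
    nlinarith
end
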